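/- For the n×n GUE, the probability that all eigenvalues lie in [a,b] equals K_{GUE} · det(A(a,b)), where A(a,b) has entries a_{i,j} = ∫ₐᵇ t^{i+j−2} e^{−t²} dt for i,j = 1,…,n, and K_{GUE} = 2^{n(n−1)/2} / (π^{n/2} ∏_{i=1}^n Γ(i)). -/

import Mathlib

/-!
Expanding both determinants in `det (f i (x j)) * det (g i (x j))` and integrating term by term
against a product measure gives Andréief's identity `∫ det * det = n! * det (∫ f i * g j)`.
The GUE integrand restricted to `[a,b]ⁿ` is of this form for the product measure of Lebesgue
measure on `[a,b]`, with `f i t = t ^ i` and `g i t = exp (-t ^ 2) * t ^ i`. It is invariant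
under permuting coordinates, and the `n!` chambers `{x | Antitone (x ∘ σ)}` cover `ℝⁿ` and meet
only where two coordinates coincide, a null set; so the ordered chamber carries `1 / n!` of the
integral.
-/

open MeasureTheory Real Finset Matrix Equiv Function
open scoped Nat

theorem Int.cast_units_mul_self {R : Type*} [Ring R] (u : ℤˣ) : ((u : ℤ) : R) * (u : ℤ) = 1 := by
  rw [← Int.cast_mul, ← Units.val_mul, Int.units_mul_self, Units.val_one, Int.cast_one]

section Andreief

variable {ι : Type*} [Fintype ι] [DecidableEq ι]

theorem Matrix.sum_perm_sum_perm_sign_mul_prod {R : Type*} [CommRing R] (m : Matrix ι ι R) :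
    ∑ σ : Perm ι, ∑ τ : Perm ι,
        ((Perm.sign σ : ℤ) : R) * ((Perm.sign τ : ℤ) : R) * ∏ i, m (σ i) (τ i) =
      (Fintype.card ι)! * m.det := by
  have row_permuted : ∀ σ : Perm ι,
      ∑ τ : Perm ι, ((Perm.sign τ : ℤ) : R) * ∏ i, m (σ i) (τ i) =
        ((Perm.sign σ : ℤ) : R) * m.det := fun σ => by
    rw [← det_permute, ← det_transpose, det_apply']
    rfl
  simp_rw [mul_assoc, ← mul_sum, row_permuted, ← mul_assoc, Int.cast_units_mul_self, one_mul,
    sum_const, card_univ, Fintype.card_perm, nsmul_eq_mul]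

variable {α : Type*}

theorem Matrix.det_mul_det_eq_sum_perm {R : Type*} [CommRing R] (f g : ι → α → R) (x : ι → α) :
    (of fun i j => f i (x j)).det * (of fun i j => g i (x j)).det =
      ∑ σ : Perm ι, ∑ τ : Perm ι, ((Perm.sign σ : ℤ) : R) * ((Perm.sign τ : ℤ) : R) *
        ∏ i, f (σ i) (x i) * g (τ i) (x i) := by
  simp_rw [det_apply', sum_mul_sum, prod_mul_distrib, of_apply]
  refine sum_congr rfl fun σ _ => sum_congr rfl fun τ _ => by ring

theorem Matrix.det_mul_det_comp_perm {R : Type*} [CommRing R] (f g : ι → α → R) (σ : Perm ι)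
    (x : ι → α) :
    (of fun i j => f i ((x ∘ σ) j)).det * (of fun i j => g i ((x ∘ σ) j)).det =
      (of fun i j => f i (x j)).det * (of fun i j => g i (x j)).det := by
  have h (h : ι → α → R) : (of fun i j => h i ((x ∘ σ) j)).det =
      ((Perm.sign σ : ℤ) : R) * (of fun i j => h i (x j)).det := by
    rw [← det_permute']
    rfl
  rw [h, h, mul_mul_mul_comm, Int.cast_units_mul_self, one_mul]

variable [MeasurableSpace α] {𝕜 : Type*} [RCLike 𝕜] (μ : Measure α) [SigmaFinite μ]
  {f g : ι → α → 𝕜}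

theorem integrable_det_mul_det (hfg : ∀ i j, Integrable (fun t => f i t * g j t) μ) :
    Integrable (fun x : ι → α => (of fun i j => f i (x j)).det * (of fun i j => g i (x j)).det)
      (Measure.pi fun _ => μ) := by
  simp_rw [det_mul_det_eq_sum_perm]
  exact integrable_finsetSum _ fun σ _ => integrable_finsetSum _ fun τ _ =>
    (Integrable.fintype_prod fun i => hfg (σ i) (τ i)).const_mul _

theorem integral_det_mul_det (hfg : ∀ i j, Integrable (fun t => f i t * g j t) μ) :
    ∫ x, (of fun i j => f i (x j)).det * (of fun i j => g i (x j)).det ∂(Measure.pi fun _ => μ) =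
      (Fintype.card ι)! * (of fun i j => ∫ t, f i t * g j t ∂μ).det := by
  have hterm (σ τ : Perm ι) : Integrable (fun x : ι → α => ((Perm.sign σ : ℤ) : 𝕜) *
      ((Perm.sign τ : ℤ) : 𝕜) * ∏ i, f (σ i) (x i) * g (τ i) (x i)) (Measure.pi fun _ => μ) :=
    (Integrable.fintype_prod fun i => hfg (σ i) (τ i)).const_mul _
  simp_rw [det_mul_det_eq_sum_perm]
  rw [integral_finsetSum _ fun σ _ => integrable_finsetSum _ fun τ _ => hterm σ τ,
    ← sum_perm_sum_perm_sign_mul_prod]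
  refine sum_congr rfl fun σ _ => ?_
  rw [integral_finsetSum _ fun τ _ => hterm σ τ]
  refine sum_congr rfl fun τ _ => ?_
  rw [integral_const_mul, integral_fintype_prod_eq_prod (fun i t => f (σ i) t * g (τ i) t)]
  rfl

end Andreief

section Symmetrization

variable {α : Type*} [LinearOrder α] {n : ℕ}

theorem exists_perm_antitone_comp (x : Fin n → α) : ∃ σ : Perm (Fin n), Antitone (x ∘ σ) :=
  ⟨Fin.revPerm.trans (Tuple.sort x), (Tuple.monotone_sort x).comp_antitone Fin.rev_anti⟩

theorem perm_eq_of_antitone_comp {x : Fin n → α} (hx : Injective x) {σ τ : Perm (Fin n)}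
    (hσ : Antitone (x ∘ σ)) (hτ : Antitone (x ∘ τ)) : σ = τ :=
  Equiv.ext fun i => hx (congrFun (Tuple.unique_antitone hσ hτ) i)

theorem measurePreserving_comp_perm {ι β : Type*} [Fintype ι] [MeasurableSpace β]
    (μ : Measure β) [SigmaFinite μ] (σ : Perm ι) :
    MeasurePreserving (fun x : ι → β => x ∘ σ) (Measure.pi fun _ => μ) (Measure.pi fun _ => μ) :=
  measurePreserving_arrowCongr' (fun _ => μ) (fun _ => μ) σ.symm (MeasurableEquiv.refl β)
    fun _ => MeasurePreserving.id μ

variable [MeasurableSpace α] {E : Type*} [NormedAddCommGroup E] [NormedSpace ℝ E]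
  {ν : Measure (Fin n → α)} {F : (Fin n → α) → E}

theorem setIntegral_antitone_comp_perm {σ : Perm (Fin n)}
    (hν : MeasurePreserving (fun x => x ∘ σ) ν ν) (hF : ∀ x, F (x ∘ σ) = F x) :
    ∫ x in {x | Antitone (x ∘ σ)}, F x ∂ν = ∫ x in {x | Antitone x}, F x ∂ν := by
  have hemb : MeasurableEmbedding fun x : Fin n → α => x ∘ σ :=
    (MeasurableEquiv.arrowCongr' σ.symm (MeasurableEquiv.refl α)).measurableEmbedding
  calc ∫ x in {x | Antitone (x ∘ σ)}, F x ∂ν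
      = ∫ x in (· ∘ σ) ⁻¹' {x | Antitone x}, F (x ∘ σ) ∂ν := by simp_rw [hF]; rfl
    _ = ∫ x in {x | Antitone x}, F x ∂ν := hν.setIntegral_preimage_emb hemb F _

variable [TopologicalSpace α] [OrderClosedTopology α] [SecondCountableTopology α]
  [OpensMeasurableSpace α]

theorem measurableSet_setOf_antitone_comp (σ : Perm (Fin n)) :
    MeasurableSet {x : Fin n → α | Antitone (x ∘ σ)} :=
  isClosed_antitone.measurableSet.preimage (by fun_prop)

theorem integral_eq_factorial_smul_setIntegral_antitone
    (hν : ∀ σ : Perm (Fin n), MeasurePreserving (fun x => x ∘ σ) ν ν)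
    (hties : ν {x | ¬ Injective x} = 0) (hF : Integrable F ν)
    (hFσ : ∀ (σ : Perm (Fin n)) x, F (x ∘ σ) = F x) :
    ∫ x, F x ∂ν = n ! • ∫ x in {x | Antitone x}, F x ∂ν := by
  have hcover : (⋃ σ : Perm (Fin n), {x : Fin n → α | Antitone (x ∘ σ)}) = Set.univ :=
    Set.eq_univ_of_forall fun x => Set.mem_iUnion.2 (exists_perm_antitone_comp x)
  have hdisj : Pairwise (AEDisjoint ν on fun σ : Perm (Fin n) => {x | Antitone (x ∘ σ)}) :=
    fun σ τ hστ => measure_mono_null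
      (fun _ hx hinj => hστ (perm_eq_of_antitone_comp hinj hx.1 hx.2)) hties
  rw [← setIntegral_univ, ← hcover, integral_iUnion_ae
    (fun σ => (measurableSet_setOf_antitone_comp σ).nullMeasurableSet) hdisj hF.integrableOn,
    tsum_fintype]
  simp_rw [setIntegral_antitone_comp_perm (hν _) (hFσ _)]
  rw [sum_const, card_univ, Fintype.card_perm, Fintype.card_fin]

end Symmetrization

theorem setIntegral_antitone_det_mul_det {α 𝕜 : Type*} [LinearOrder α] [TopologicalSpace α]
    [OrderClosedTopology α] [SecondCountableTopology α] [MeasurableSpace α]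
    [OpensMeasurableSpace α] [RCLike 𝕜] {n : ℕ} (μ : Measure α) [SigmaFinite μ]
    (hties : Measure.pi (fun _ => μ) {x : Fin n → α | ¬ Injective x} = 0)
    {f g : Fin n → α → 𝕜} (hfg : ∀ i j, Integrable (fun t => f i t * g j t) μ) :
    ∫ x in {x | Antitone x},
        (of fun i j => f i (x j)).det * (of fun i j => g i (x j)).det ∂(Measure.pi fun _ => μ) =
      (of fun i j => ∫ t, f i t * g j t ∂μ).det := by
  have h := integral_eq_factorial_smul_setIntegral_antitone (measurePreserving_comp_perm μ)
    hties (integrable_det_mul_det μ hfg) (det_mul_det_comp_perm f g)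
  rw [integral_det_mul_det μ hfg, Fintype.card_fin, nsmul_eq_mul] at h
  exact (mul_left_cancel₀ (Nat.cast_ne_zero.2 n.factorial_ne_zero) h).symm

theorem volume_setOf_apply_eq_apply {ι : Type*} [Fintype ι] {i j : ι} (hij : i ≠ j) :
    volume {x : ι → ℝ | x i = x j} = 0 := by
  classical
  let L : (ι → ℝ) →ₗ[ℝ] ℝ := (LinearMap.proj i : (ι → ℝ) →ₗ[ℝ] ℝ) - LinearMap.proj j
  have hL : LinearMap.ker L ≠ ⊤ := fun h => by
    simpa [L, hij.symm] using LinearMap.congr_fun (LinearMap.ker_eq_top.1 h) (Pi.single i 1)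
  have hker : {x : ι → ℝ | x i = x j} = LinearMap.ker L := by
    ext x
    simp [L, sub_eq_zero]
  rw [hker]
  exact Measure.addHaar_submodule _ _ hL

theorem volume_setOf_not_injective {ι : Type*} [Fintype ι] :
    volume {x : ι → ℝ | ¬ Injective x} = 0 := by
  refine measure_mono_null (t := ⋃ i, ⋃ j, ⋃ (_ : i ≠ j), {x | x i = x j}) ?_
    (measure_iUnion_null fun i => measure_iUnion_null fun j => measure_iUnion_null fun hij =>
      volume_setOf_apply_eq_apply hij)
  intro x hx
  obtain ⟨i, j, hxij, hij⟩ : ∃ i j, x i = x j ∧ i ≠ j := by simpa [Injective] using hx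
  exact Set.mem_iUnion₂.2 ⟨i, j, Set.mem_iUnion.2 ⟨hij, hxij⟩⟩

theorem Matrix.prod_Ioi_sub_sq_mul_prod_eq_det_mul_det {R : Type*} [CommRing R] {n : ℕ}
    (w : R → R) (x : Fin n → R) :
    (∏ i, ∏ j ∈ Ioi i, (x i - x j)) ^ 2 * ∏ i, w (x i) =
      (of fun i j : Fin n => x j ^ (i : ℕ)).det *
        (of fun i j : Fin n => w (x j) * x j ^ (i : ℕ)).det := by
  have hsq : (∏ i, ∏ j ∈ Ioi i, (x i - x j)) ^ 2 = (vandermonde x).det ^ 2 := by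
    simp_rw [det_vandermonde, ← prod_pow]
    exact prod_congr rfl fun i _ => prod_congr rfl fun j _ => by ring
  have hrow : (of fun i j : Fin n => w (x j) * x j ^ (i : ℕ)).det =
      (∏ j, w (x j)) * (vandermonde x)ᵀ.det := det_mul_row _ _
  rw [hsq, hrow, det_transpose]
  change _ = (vandermonde x)ᵀ.det * _
  rw [det_transpose]
  ring

/-- For the `n×n` GUE, whose ordered-eigenvalue joint density is
`K_GUE ∏_{i<j}(xᵢ−xⱼ)² ∏ᵢ e^(−xᵢ²)` with
`K_GUE = 2^(n(n−1)/2) / (π^(n/2) ∏_{i=1}^n Γ(i))`, the probability that all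
eigenvalues lie in `[a,b]` equals `K_GUE · det A(a,b)`, where
`a_{i,j} = ∫ₐᵇ t^(i+j−2) e^(−t²) dt`. -/
theorem gue_psi (n : ℕ) (a b : ℝ) (hab : a ≤ b) :
    (∫ x in {x : Fin n → ℝ | (∀ i j : Fin n, i ≤ j → x j ≤ x i) ∧ ∀ i, x i ∈ Set.Icc a b},
      (2 : ℝ) ^ (n * (n - 1) / 2) /
          (Real.pi ^ ((n : ℝ) / 2) * ∏ i ∈ Finset.range n, Real.Gamma ((i : ℝ) + 1)) *
        ((∏ i : Fin n, ∏ j ∈ Finset.Ioi i, (x i - x j)) ^ 2 *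
          ∏ i, Real.exp (-(x i) ^ 2))) =
      ((2 : ℝ) ^ (n * (n - 1) / 2) /
          (Real.pi ^ ((n : ℝ) / 2) * ∏ i ∈ Finset.range n, Real.Gamma ((i : ℝ) + 1))) *
        (Matrix.of fun i j : Fin n =>
          ∫ t in a..b, t ^ (i.1 + j.1) * Real.exp (-t ^ 2)).det := by
  set μ := volume.restrict (Set.Icc a b)
  have hbox : (volume : Measure (Fin n → ℝ)).restrict (Set.univ.pi fun _ => Set.Icc a b) =
      Measure.pi fun _ => μ := Measure.restrict_pi_pi _ _
  have hties : Measure.pi (fun _ => μ) {x : Fin n → ℝ | ¬ Injective x} = 0 := by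
    rw [← hbox]
    exact Measure.absolutelyContinuous_of_le Measure.restrict_le_self volume_setOf_not_injective
  have hset : {x : Fin n → ℝ | (∀ i j : Fin n, i ≤ j → x j ≤ x i) ∧ ∀ i, x i ∈ Set.Icc a b} =
      {x | Antitone x} ∩ Set.univ.pi fun _ => Set.Icc a b := by
    ext x
    simp only [Set.mem_inter_iff, Set.mem_univ_pi]
    rfl
  have hentry (i j : ℕ) : ∫ t, t ^ i * (exp (-t ^ 2) * t ^ j) ∂μ =
      ∫ t in a..b, t ^ (i + j) * exp (-t ^ 2) := by
    rw [intervalIntegral.integral_of_le hab, ← integral_Icc_eq_integral_Ioc]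
    exact integral_congr_ae (Filter.Eventually.of_forall fun t => by ring)
  rw [integral_const_mul, hset, ← Measure.restrict_restrict' (MeasurableSet.univ_pi fun _ =>
    measurableSet_Icc), hbox]
  simp_rw [prod_Ioi_sub_sq_mul_prod_eq_det_mul_det fun t => exp (-t ^ 2)]
  rw [setIntegral_antitone_det_mul_det μ hties (f := fun i t => t ^ (i : ℕ))
    (g := fun i t => exp (-t ^ 2) * t ^ (i : ℕ)) fun i j =>
      Continuous.integrableOn_Icc (by fun_prop)]
  simp_rw [hentry]
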